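/- The flat principal S¹-bundle over the Eilenberg–MacLane space K(ℚ/ℤ,1) with holonomy the inclusion homomorphism ℚ/ℤ ↪ S¹ is not virtually trivial: its classifying map K(ℚ/ℤ,1) → BS¹ = K(ℤ,2) corresponds to an element of infinite order in H^2(K(ℚ/ℤ,1), ℤ) ≅ lim_n ℤ/nℤ. -/

import Mathlib

noncomputable section
set_option linter.unusedVariables false
open scoped Manifold Topology

/-! ### Principal bundles -/

/-- A principal `G`-bundle structure on a map `p : E → X`: a continuous free fiber-preserving
`G`-action on `E` which is locally trivial over `X`. -/
structure IsPrincipalBundle (G : Type) [Group G] [TopologicalSpace G]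
    {E X : Type} [TopologicalSpace E] [TopologicalSpace X] [MulAction G E]
    (p : E → X) : Prop where
  continuous_proj : Continuous p
  surjective_proj : Function.Surjective p
  continuous_smul : Continuous fun q : G × E => q.1 • q.2
  proj_smul : ∀ (g : G) (e : E), p (g • e) = p e
  locally_trivial : ∀ x : X, ∃ U : Set X, IsOpen U ∧ x ∈ U ∧
    ∃ φ : ↥U × G ≃ₜ ↥(p ⁻¹' U),
      (∀ (u : ↥U) (g : G), p (φ (u, g) : E) = (u : X)) ∧
      (∀ (u : ↥U) (g h : G), (φ (u, h * g) : E) = h • (φ (u, g) : E))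

/-- A principal `G`-bundle is trivial if it is isomorphic, as a `G`-bundle, to the
product bundle `X × G → X`. -/
def IsTrivialBundle (G : Type) [Group G] [TopologicalSpace G]
    {E X : Type} [TopologicalSpace E] [TopologicalSpace X] [MulAction G E]
    (p : E → X) : Prop :=
  ∃ φ : X × G ≃ₜ E, (∀ (x : X) (g : G), p (φ (x, g)) = x) ∧
    ∀ (x : X) (g h : G), φ (x, h * g) = h • φ (x, g)

/-- A finite covering map: a covering map with finite fibres. -/
def IsFiniteCovering {Y X : Type} [TopologicalSpace Y] [TopologicalSpace X] (f : Y → X) : Prop :=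
  IsCoveringMap f ∧ ∀ x : X, Finite (f ⁻¹' {x})

/-- A principal `G`-bundle `p : E → X` is virtually trivial if its pull-back to some finite
covering space of `X` is trivial. -/
def IsVirtuallyTrivial (G : Type) [Group G] [TopologicalSpace G]
    {E X : Type} [TopologicalSpace E] [TopologicalSpace X] [MulAction G E]
    (p : E → X) : Prop :=
  ∃ (Y : Type) (tY : TopologicalSpace Y) (f : Y → X),
    ConnectedSpace Y ∧ IsFiniteCovering f ∧
    ∃ φ : Y × G ≃ₜ {q : Y × E // f q.1 = p q.2},
      (∀ (y : Y) (g : G), ((φ (y, g) : Y × E)).1 = y) ∧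
      ∀ (y : Y) (g h : G), ((φ (y, h * g) : Y × E)).2 = h • ((φ (y, g) : Y × E)).2

/-! ### Flat bundles -/

/-- The total space `X̃ ×ρ G` of the flat bundle associated to a representation
`ρ : Γ → G` of the deck group `Γ` of a covering `X̃ → X`. -/
def FlatTotalSpace (Xt : Type) {G Γ : Type} [TopologicalSpace Xt] [TopologicalSpace G]
    [Group G] [Group Γ] [MulAction Γ Xt] (ρ : Γ →* G) : Type :=
  Quot (fun q q' : Xt × G => ∃ γ : Γ, q' = (γ • q.1, q.2 * (ρ γ)⁻¹))

instance {Xt G Γ : Type} [TopologicalSpace Xt] [TopologicalSpace G]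
    [Group G] [Group Γ] [MulAction Γ Xt] (ρ : Γ →* G) :
    TopologicalSpace (FlatTotalSpace Xt ρ) :=
  instTopologicalSpaceQuot

/-- The projection `X̃ ×ρ G → X`. -/
def FlatTotalSpace.proj {Xt X G Γ : Type} [TopologicalSpace Xt] [TopologicalSpace X]
    [TopologicalSpace G] [Group G] [Group Γ] [MulAction Γ Xt] (ρ : Γ →* G)
    (u : Xt → X) (hu : ∀ (γ : Γ) (x : Xt), u (γ • x) = u x) :
    FlatTotalSpace Xt ρ → X :=
  Quot.lift (fun q => u q.1) (by rintro ⟨x, g⟩ ⟨y, h⟩ ⟨γ, hγ⟩; cases hγ; exact (hu γ x).symm)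

/-- The left `G`-action on `X̃ ×ρ G`. -/
def FlatTotalSpace.smul {Xt G Γ : Type} [TopologicalSpace Xt] [TopologicalSpace G]
    [Group G] [Group Γ] [MulAction Γ Xt] (ρ : Γ →* G) (h : G) :
    FlatTotalSpace Xt ρ → FlatTotalSpace Xt ρ :=
  Quot.map (fun q => (q.1, h * q.2))
    (by rintro ⟨x, g⟩ ⟨y, g'⟩ ⟨γ, hγ⟩; cases hγ; exact ⟨γ, by simp [mul_assoc]⟩)

/-- A principal `G`-bundle `p : E → X` is flat if it is equivalent to the bundle
`X̃ ×ρ G → X` canonically associated with the universal cover `X̃` of `X` and a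
holonomy homomorphism `ρ : π₁(X) → G`.  Here the universal cover is presented as a
covering `u : X̃ → X` with `X̃` connected and simply connected, together with the free
fibrewise-transitive action of the fundamental group `Γ` by deck transformations. -/
def IsFlatBundle (G : Type) [Group G] [TopologicalSpace G]
    {E X : Type} [TopologicalSpace E] [TopologicalSpace X] [MulAction G E]
    (p : E → X) : Prop :=
  IsPrincipalBundle G p ∧
  ∃ (Xt : Type) (tXt : TopologicalSpace Xt) (u : Xt → X)
    (Γ : Type) (gΓ : Group Γ) (aΓ : MulAction Γ Xt) (ρ : Γ →* G),
    IsCoveringMap u ∧ ConnectedSpace Xt ∧ SimplyConnectedSpace Xt ∧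
    (∀ γ : Γ, Continuous fun x : Xt => γ • x) ∧
    (∀ (γ : Γ) (x : Xt), γ • x = x → γ = 1) ∧
    ∃ hu : ∀ (γ : Γ) (x : Xt), u (γ • x) = u x,
    (∀ x y : Xt, u x = u y → ∃ γ : Γ, γ • x = y) ∧
    ∃ Φ : E ≃ₜ FlatTotalSpace Xt ρ,
      (∀ e : E, FlatTotalSpace.proj ρ u hu (Φ e) = p e) ∧
      ∀ (h : G) (e : E), Φ (h • e) = FlatTotalSpace.smul ρ h (Φ e)
/-! ### CW complexes -/

/-- The closed `n`-disk. -/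
def CWDisk (n : ℕ) : Set (EuclideanSpace ℝ (Fin n)) := Metric.closedBall 0 1

/-- The open `n`-cell inside the closed `n`-disk. -/
def CWInterior (n : ℕ) : Set ↥(CWDisk n) := {y | ‖(y : EuclideanSpace ℝ (Fin n))‖ < 1}

/-- The boundary sphere of the closed `n`-disk. -/
def CWBoundary (n : ℕ) : Set ↥(CWDisk n) := {y | ‖(y : EuclideanSpace ℝ (Fin n))‖ = 1}

/-- A CW structure on a space `X`: a Hausdorff space together with characteristic maps
from closed disks whose open cells partition `X`, such that the boundary of each cell is
contained in cells of strictly smaller dimension, each closed cell meets only finitely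
many open cells (closure finiteness), and `X` carries the weak topology determined by
the characteristic maps. -/
structure CWStructure (X : Type) [TopologicalSpace X] : Type 1 where
  cell : Type
  dim : cell → ℕ
  char : ∀ i : cell, C(↥(CWDisk (dim i)), X)
  t2 : T2Space X
  injOn : ∀ i : cell, Set.InjOn (char i) (CWInterior (dim i))
  cover : ∀ x : X, ∃ (i : cell) (y : ↥(CWDisk (dim i))), y ∈ CWInterior (dim i) ∧ char i y = x
  disjoint' : Pairwise fun i j =>
    Disjoint (char i '' CWInterior (dim i)) (char j '' CWInterior (dim j))
  boundary : ∀ i : cell, char i '' CWBoundary (dim i) ⊆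
    ⋃ j ∈ {j : cell | dim j < dim i}, char j '' CWInterior (dim j)
  closureFinite : ∀ i : cell,
    {j : cell | (Set.range (char i) ∩ char j '' CWInterior (dim j)).Nonempty}.Finite
  weak : ∀ s : Set X, (∀ i : cell, IsClosed (char i ⁻¹' s)) → IsClosed s

/-- A finite CW structure on a space `X` is a CW structure with finitely many cells. -/
structure FiniteCWStructure (X : Type) [TopologicalSpace X] extends CWStructure X where
  finite_cell : Finite cell


/-
Suppose the pull-back along a finite connected covering `f : Y → X` is trivial. As `X̃` is
contractible, `u` lifts through `f` to `v : X̃ → Y`; since `Γ ≅ ℚ/ℤ` is infinite and the fibres of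
`f` are finite, some deck transformation `γ ≠ 1` fixes `v`. Flatness gives a section `s` of the
bundle pulled back to `X̃` with `s (γ x) = ρ γ • s x`, so the coordinate `τ : X̃ → S¹` of `(v, s)`
in the trivialization satisfies `τ (γ x) = ρ γ * τ x`. Lifting `τ` to `T : X̃ → ℝ` turns this into
`T (γ x) = T x + c` with `exp c = ρ γ`. As `γ` has finite order `n`, `n c = 0`, so `ρ γ = 1`,
contradicting the injectivity of `ρ`.
-/

namespace IsCoveringMap

variable {E X : Type*} [TopologicalSpace E] [TopologicalSpace X] {f : E → X}

theorem surjective [ConnectedSpace X] [Nonempty E] (hf : IsCoveringMap f) :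
    Function.Surjective f := by
  have hclosed : IsClosed (Set.range f) := by
    refine isOpen_compl_iff.mp (isOpen_iff_mem_nhds.mpr fun x hx => ?_)
    obtain ⟨-, U, hxU, hU, -, H, -⟩ := hf x
    refine Filter.mem_of_superset (hU.mem_nhds hxU) ?_
    rintro x' hx' ⟨e, rfl⟩
    exact hx ⟨_, (H ⟨e, hx'⟩).2.2⟩
  exact Set.range_eq_univ.mp
    (IsClopen.eq_univ ⟨hclosed, hf.isOpenMap.isOpen_range⟩ (Set.range_nonempty f))

theorem exists_lift_of_contractibleSpace {A : Type*} [TopologicalSpace A] [ContractibleSpace A]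
    (hf : IsCoveringMap f) (hsurj : Function.Surjective f) (g : C(A, X)) :
    ∃ g' : C(A, E), f ∘ g' = g := by
  obtain ⟨a₀, ⟨F⟩⟩ := id_nullhomotopic A
  obtain ⟨e₀, he₀⟩ := hsurj (g a₀)
  let H : C(unitInterval × A, X) := g.comp F.symm.toContinuousMap
  let L := hf.liftHomotopy H (.const A e₀) (fun a => by simp [H, he₀])
  refine ⟨⟨fun a => L (1, a), by fun_prop⟩, funext fun a => ?_⟩
  simpa [H] using congrFun (hf.liftHomotopy_lifts H _ _) (1, a)

theorem exists_ne_one_forall_smul_eq {Γ A : Type*} [Group Γ] [Infinite Γ] [TopologicalSpace A]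
    [PreconnectedSpace A] [Nonempty A] [MulAction Γ A] (hf : IsCoveringMap f)
    (hfin : ∀ x, Finite (f ⁻¹' {x})) (hcont : ∀ γ : Γ, Continuous fun a : A => γ • a)
    {v : A → E} (hv : Continuous v) (hinv : ∀ (γ : Γ) a, f (v (γ • a)) = f (v a)) :
    ∃ γ : Γ, γ ≠ 1 ∧ ∀ a, v (γ • a) = v a := by
  obtain ⟨a₀⟩ := (inferInstance : Nonempty A)
  have := hfin (f (v a₀))
  -- Infinitely many translates of `v` pass through the finite fibre over `f (v a₀)`.
  obtain ⟨α, β, hαβ, hv₀⟩ := Finite.exists_ne_map_eq_of_infinite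
    fun γ : Γ => (⟨v (γ • a₀), hinv γ a₀⟩ : f ⁻¹' {f (v a₀)})
  have hαβv : (fun a => v (α • a)) = fun a => v (β • a) :=
    hf.eq_of_comp_eq (hv.comp (hcont α)) (hv.comp (hcont β))
      (funext fun a => by simp [hinv]) a₀ (congrArg Subtype.val hv₀)
  refine ⟨α * β⁻¹, mul_inv_eq_one.not.mpr hαβ, fun a => ?_⟩
  rw [mul_smul, congrFun hαβv, smul_inv_smul]

end IsCoveringMap

theorem Circle.eq_one_of_comp_eq_mul_of_iterate_eq_id {Z : Type*} [TopologicalSpace Z]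
    [ContractibleSpace Z] {τ : Z → Circle} (hτ : Continuous τ) {γ : Z → Z} (hγ : Continuous γ)
    {n : ℕ} (hn : n ≠ 0) (hγn : γ^[n] = id) {z : Circle} (hz : ∀ x, τ (γ x) = z * τ x) :
    z = 1 := by
  obtain ⟨T, hT⟩ :=
    Circle.isCoveringMap_exp.exists_lift_of_contractibleSpace Circle.exp_surjective ⟨τ, hτ⟩
  have hT_apply (x : Z) : Circle.exp (T x) = τ x := congrFun hT x
  obtain ⟨x₀⟩ := (inferInstance : Nonempty Z)
  set c := T (γ x₀) - T x₀
  have hc : Circle.exp c = z := by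
    rw [Circle.exp_sub, hT_apply, hT_apply, hz, mul_div_cancel_right]
  -- `T ∘ γ` and `T + c` are lifts of `τ ∘ γ` that agree at `x₀`.
  have hTγ : ∀ x, T (γ x) = T x + c := congrFun <|
    Circle.isCoveringMap_exp.eq_of_comp_eq (T.continuous.comp hγ)
      (T.continuous.add continuous_const)
      (funext fun x => by simp [Circle.exp_add, hT_apply, hz, hc, mul_comm]) x₀ (by ring)
  have hTγk (k : ℕ) (x : Z) : T (γ^[k] x) = T x + k * c := by
    induction k with
    | zero => simp
    | succ k ih => rw [Function.iterate_succ_apply', hTγ, ih]; push_cast; ring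
  have hnc : (n : ℝ) * c = 0 := by simpa [hγn] using hTγk n x₀
  have hc0 : c = 0 := (mul_eq_zero.mp hnc).resolve_left (Nat.cast_ne_zero.mpr hn)
  rw [← hc, hc0, Circle.exp_zero]

theorem AddCircle.isOfFinAddOrder_rat {p : ℚ} [Fact (0 < p)] (x : AddCircle p) :
    IsOfFinAddOrder x := by
  induction x using QuotientAddGroup.induction_on with
  | H a => exact AddCircle.isOfFinAddOrder_iff_exists_rat_eq_div.mpr ⟨a / p, Rat.cast_id _⟩

instance AddCircle.infinite_rat {p : ℚ} [Fact (0 < p)] : Infinite (AddCircle p) := by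
  let x (n : ℕ) : AddCircle p := ((n + 1 : ℕ) : ℚ)⁻¹ * p
  have horder (n : ℕ) : addOrderOf (x n) = n + 1 := by
    have := AddCircle.addOrderOf_coe_rat (p := p) (q := ((n + 1 : ℕ) : ℚ)⁻¹)
    rwa [Rat.cast_id, Rat.inv_natCast_den_of_pos n.succ_pos] at this
  exact Infinite.of_injective x fun m n hmn => by simpa [horder] using congrArg addOrderOf hmn

namespace FlatTotalSpace

def mk {Xt G Γ : Type} [TopologicalSpace Xt] [TopologicalSpace G] [Group G] [Group Γ]
    [MulAction Γ Xt] (ρ : Γ →* G) (x : Xt) (g : G) : FlatTotalSpace Xt ρ :=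
  Quot.mk _ (x, g)

theorem exists_equivariant_section {Xt X G Γ E : Type} [TopologicalSpace Xt]
    [TopologicalSpace X] [TopologicalSpace G] [Group G] [Group Γ] [MulAction Γ Xt]
    [TopologicalSpace E] [MulAction G E] {ρ : Γ →* G} {u : Xt → X}
    {hu : ∀ (γ : Γ) (x : Xt), u (γ • x) = u x} {p : E → X} (Φ : E ≃ₜ FlatTotalSpace Xt ρ)
    (hΦ_proj : ∀ e, proj ρ u hu (Φ e) = p e) (hΦ_smul : ∀ (g : G) e, Φ (g • e) = smul ρ g (Φ e)) :
    ∃ s : Xt → E, Continuous s ∧ (∀ x, p (s x) = u x) ∧ ∀ (γ : Γ) x, s (γ • x) = ρ γ • s x := by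
  refine ⟨fun x => Φ.symm (mk ρ x 1),
    Φ.symm.continuous.comp (continuous_quot_mk.comp (continuous_id.prodMk continuous_const)),
    fun x => by rw [← hΦ_proj, Φ.apply_symm_apply]; rfl, fun γ x => Φ.injective ?_⟩
  rw [hΦ_smul, Φ.apply_symm_apply, Φ.apply_symm_apply]
  exact (Quot.sound ⟨γ, by simp⟩).symm

end FlatTotalSpace

theorem Equiv.snd_symm_pullback_smul {G Y E X : Type*} [Group G] [MulAction G E] {f : Y → X}
    {p : E → X} (φ : Y × G ≃ {q : Y × E // f q.1 = p q.2})
    (hφ_fst : ∀ y g, (φ (y, g) : Y × E).1 = y)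
    (hφ_smul : ∀ y g h, (φ (y, h * g) : Y × E).2 = h • (φ (y, g) : Y × E).2)
    {y : Y} {e : E} (g : G) (h : f y = p e) (h' : f y = p (g • e)) :
    (φ.symm ⟨(y, g • e), h'⟩).2 = g * (φ.symm ⟨(y, e), h⟩).2 := by
  set w := φ.symm ⟨(y, e), h⟩
  have hw : φ w = ⟨(y, e), h⟩ := φ.apply_symm_apply _
  have hw₁ : w.1 = y := by simpa [hw] using (hφ_fst w.1 w.2).symm
  suffices φ.symm ⟨(y, g • e), h'⟩ = (y, g * w.2) by rw [this]
  rw [φ.symm_apply_eq]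
  ext
  · simp [hφ_fst]
  · rw [hφ_smul, show (y, w.2) = w from Prod.ext hw₁.symm rfl, hw]

theorem flat_circle_bundle_over_K_QZ_1_not_virtually_trivial_general
    (X : Type) [TopologicalSpace X]
    (Xt : Type) [TopologicalSpace Xt] (u : Xt → X)
    (hu : IsCoveringMap u) (hcontr : ContractibleSpace Xt)
    (Γ : Type) [Group Γ] [MulAction Γ Xt]
    (hcont : ∀ γ : Γ, Continuous fun x : Xt => γ • x)
    (hover : ∀ (γ : Γ) (x : Xt), u (γ • x) = u x)
    (e : Γ ≃* Multiplicative (AddCircle (1 : ℚ)))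
    (ρ : Γ →* Circle) (hρ : Function.Injective ⇑ρ)
    (E : Type) [TopologicalSpace E] [MulAction Circle E] (p : E → X)
    (hp : IsPrincipalBundle Circle p)
    (Φ : E ≃ₜ FlatTotalSpace Xt ρ)
    (hΦ_proj : ∀ e : E, FlatTotalSpace.proj ρ u hover (Φ e) = p e)
    (hΦ_equiv : ∀ (g : Circle) (e : E), Φ (g • e) = FlatTotalSpace.smul ρ g (Φ e)) :
    ¬ IsVirtuallyTrivial Circle p := by
  rintro ⟨Y, _, f, _, ⟨hf, hf_fin⟩, φ, hφ_fst, hφ_smul⟩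
  have hu_surj : Function.Surjective u := fun x => by
    obtain ⟨e, rfl⟩ := hp.surjective_proj x
    obtain ⟨⟨x', g⟩, hx'⟩ := Quot.exists_rep (Φ e)
    exact ⟨x', by rw [← hΦ_proj, ← hx']; rfl⟩
  have : ConnectedSpace X := hu_surj.connectedSpace hu.continuous
  obtain ⟨v, hv⟩ := hf.exists_lift_of_contractibleSpace hf.surjective ⟨u, hu.continuous⟩
  have hv_apply (x : Xt) : f (v x) = u x := congrFun hv x
  have : Infinite Γ := Infinite.of_injective e.symm e.symm.injective
  obtain ⟨γ, hγ, hγv⟩ := hf.exists_ne_one_forall_smul_eq hf_fin hcont v.continuous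
    fun γ x => by rw [hv_apply, hv_apply, hover]
  obtain ⟨s, hs, hs_proj, hs_smul⟩ := FlatTotalSpace.exists_equivariant_section Φ hΦ_proj hΦ_equiv
  let τ (x : Xt) : Circle := (φ.symm ⟨(v x, s x), by rw [hv_apply, hs_proj]⟩).2
  have hτ : ∀ x, τ (γ • x) = ρ γ * τ x := fun x => by
    simp only [τ, hγv, hs_smul]
    exact φ.toEquiv.snd_symm_pullback_smul hφ_fst hφ_smul _ _ _
  have hγ_fin : IsOfFinOrder γ := (e.injective.isOfFinOrder_iff (f := e.toMonoidHom)).mp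
    ((isOfFinOrder_ofAdd_iff (α := AddCircle (1 : ℚ))).mpr (AddCircle.isOfFinAddOrder_rat _))
  refine hγ (hρ ?_)
  rw [map_one]
  refine Circle.eq_one_of_comp_eq_mul_of_iterate_eq_id ?_ (hcont γ) hγ_fin.orderOf_pos.ne'
    ?_ hτ
  · fun_prop
  · rw [smul_iterate, pow_orderOf_eq_one]; exact funext (one_smul Γ)

/-- The flat principal `S¹`-bundle over the Eilenberg–MacLane space
`K(ℚ/ℤ,1)` with holonomy the inclusion `ℚ/ℤ ↪ S¹` is not virtually trivial.  Here
`K(ℚ/ℤ,1)` is presented as a CW-complex `X` with a contractible universal cover `X̃` whose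
deck transformation group `Γ` is isomorphic to `ℚ/ℤ`, and the holonomy is any injective
homomorphism `ρ : Γ → S¹` (i.e. the inclusion of `ℚ/ℤ` as the torsion subgroup of `S¹`,
up to an automorphism of `ℚ/ℤ`). -/
theorem flat_circle_bundle_over_K_QZ_1_not_virtually_trivial
    (X : Type) [TopologicalSpace X] (hX : Nonempty (CWStructure X))
    (Xt : Type) [TopologicalSpace Xt] (u : Xt → X)
    (hu : IsCoveringMap u) [ConnectedSpace Xt] (hcontr : ContractibleSpace Xt)
    (Γ : Type) [Group Γ] [MulAction Γ Xt]
    (hcont : ∀ γ : Γ, Continuous fun x : Xt => γ • x)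
    (hfree : ∀ (γ : Γ) (x : Xt), γ • x = x → γ = 1)
    (hover : ∀ (γ : Γ) (x : Xt), u (γ • x) = u x)
    (htrans : ∀ x y : Xt, u x = u y → ∃ γ : Γ, γ • x = y)
    (e : Γ ≃* Multiplicative (AddCircle (1 : ℚ)))
    (ρ : Γ →* Circle) (hρ : Function.Injective ⇑ρ)
    (E : Type) [TopologicalSpace E] [MulAction Circle E] (p : E → X)
    (hp : IsPrincipalBundle Circle p)
    (Φ : E ≃ₜ FlatTotalSpace Xt ρ)
    (hΦ_proj : ∀ e : E, FlatTotalSpace.proj ρ u hover (Φ e) = p e)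
    (hΦ_equiv : ∀ (g : Circle) (e : E), Φ (g • e) = FlatTotalSpace.smul ρ g (Φ e)) :
    ¬ IsVirtuallyTrivial Circle p :=
  flat_circle_bundle_over_K_QZ_1_not_virtually_trivial_general X Xt u hu hcontr Γ hcont hover e ρ hρ
    E p hp Φ hΦ_proj hΦ_equiv
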